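/- With X normal Hausdorff and Y ⊆ C_b(X) a Banach space with ‖·‖ ≥ ‖·‖_∞ satisfying (H): for every bounded below lower semicontinuous f with nonempty domain and every φ ∈ Y, F(f − φ) = F(f) − φ̂, where φ̂(Q) := Q(φ). In particular F(φ) = φ̂ on the weak*-closed convex hull of Δ_Y(X) and +∞ outside. -/

import Mathlib

open BoundedContinuousFunction

/-- The transform `F(f)(Q) = sup_{ψ ∈ Y} (Q(ψ) − f^×(ψ))`. -/
noncomputable def FTransform {X : Type*} [TopologicalSpace X]
    {Y : Type*} [NormedAddCommGroup Y] [NormedSpace ℝ Y]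
    (j : Y →ₗ[ℝ] (X →ᵇ ℝ)) (f : X → EReal) (Q : WeakDual ℝ Y) : EReal :=
  ⨆ ψ : Y, ((Q ψ : EReal) - ⨆ x : X, ((j ψ x : EReal) - f x))

/-!
Shifting `f` by `j φ` shifts its conjugate, `(f - φ)^×(ψ) = f^×(ψ + φ)`, so reindexing the
supremum defining `F` pulls out `Q(φ)`. In particular `F(φ) = F(0) + φ̂`, and `F(0)` is the
conjugate of the support function `ψ ↦ sup_x ψ(x)` of `Δ(X)`: it vanishes on the weak-* closed
convex hull of `Δ(X)`. Off that hull a Hahn–Banach separating functional, which is evaluation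
at some `ψ₀ ∈ Y` because `Y` is the dual of `(Y*, weak-*)`, makes
`Q(t ψ₀) - sup_x (t ψ₀)(x) → ∞` as `t → ∞`.
-/

namespace EReal

lemma coe_sub_sub_coe_eq_add_sub (a b : ℝ) (c : EReal) :
    (a : EReal) - (c - b) = ((a + b : ℝ) : EReal) - c := by
  induction c with
  | bot => simp
  | coe c => norm_cast; ring
  | top => simp

lemma coe_sub_sub_right_comm (a b : ℝ) (c : EReal) :
    ((a - b : ℝ) : EReal) - c = (a - c) - b := by
  induction c with
  | bot => rw [coe_sub_bot, coe_sub_bot, top_sub_coe]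
  | coe c => norm_cast; ring
  | top => simp

lemma iSup_sub_coe {ι : Sort*} (g : ι → EReal) (c : ℝ) :
    ⨆ i, (g i - c) = (⨆ i, g i) - c := by
  have hc (a b : EReal) : a - c ≤ b ↔ a ≤ b + c :=
    sub_le_iff_le_add (.inl (coe_ne_bot c)) (.inl (coe_ne_top c))
  refine le_antisymm (iSup_le fun i => sub_le_sub (le_iSup g i) le_rfl) ?_
  rw [hc]
  exact iSup_le fun i => (hc _ _).1 (le_iSup (g · - c) i)

lemma coe_le_iSup_coe_of_forall_le {ι : Sort*} {g : ι → ℝ} {a : ℝ}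
    (h : ∀ c : ℝ, (∀ i, g i ≤ c) → a ≤ c) : (a : EReal) ≤ ⨆ i, (g i : EReal) := by
  by_contra! hlt
  obtain ⟨c, hsup, hca⟩ := lt_iff_exists_real_btwn.1 hlt
  exact (EReal.coe_lt_coe_iff.1 hca).not_ge <|
    h c fun i => EReal.coe_le_coe_iff.1 <| (le_iSup (fun i => (g i : EReal)) i).trans hsup.le

end EReal

namespace WeakDual

variable {Y : Type*} [NormedAddCommGroup Y] [NormedSpace ℝ Y] {ι : Type*}
  {Δ : ι → WeakDual ℝ Y} {Q : WeakDual ℝ Y}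

lemma apply_le_of_mem_closure_convexHull (hQ : Q ∈ closure (convexHull ℝ (Set.range Δ)))
    {ψ : Y} {c : ℝ} (hc : ∀ i, Δ i ψ ≤ c) : Q ψ ≤ c := by
  have hK : closure (convexHull ℝ (Set.range Δ)) ⊆ {P : WeakDual ℝ Y | P ψ ≤ c} :=
    closure_minimal
      (convexHull_min (Set.range_subset_iff.2 hc) ((convex_Iic c).is_linear_preimage
        (f := fun P : WeakDual ℝ Y => P ψ) ⟨fun _ _ => rfl, fun _ _ => rfl⟩))
      (isClosed_Iic.preimage (eval_continuous ψ))
  exact hK hQ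

lemma iSup_sub_iSup_eq_zero_of_mem_closure_convexHull
    (hQ : Q ∈ closure (convexHull ℝ (Set.range Δ))) :
    ⨆ ψ : Y, ((Q ψ : EReal) - ⨆ i, (Δ i ψ : EReal)) = 0 := by
  refine le_antisymm (iSup_le fun ψ => EReal.sub_nonpos.2 <| EReal.coe_le_iSup_coe_of_forall_le
    fun c hc => apply_le_of_mem_closure_convexHull hQ hc) ?_
  refine le_iSup_of_le 0 ?_
  simp

lemma iSup_sub_iSup_eq_top_of_notMem_closure_convexHull
    (hQ : Q ∉ closure (convexHull ℝ (Set.range Δ))) :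
    ⨆ ψ : Y, ((Q ψ : EReal) - ⨆ i, (Δ i ψ : EReal)) = ⊤ := by
  have : LocallyConvexSpace ℝ (WeakDual ℝ Y) := WeakBilin.locallyConvexSpace
  obtain ⟨L, u, hLK, hLQ⟩ :=
    geometric_hahn_banach_closed_point (convex_convexHull ℝ _).closure isClosed_closure hQ
  obtain ⟨ψ₀, rfl⟩ := LinearMap.dualEmbedding_surjective (topDualPairing ℝ Y) L
  have hΔψ₀ (i : ι) : Δ i ψ₀ ≤ u :=
    (hLK _ (subset_closure (subset_convexHull ℝ _ (Set.mem_range_self i)))).le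
  have hgap : 0 < Q ψ₀ - u := sub_pos.2 hLQ
  refine (EReal.eq_top_iff_forall_lt _).2 fun M => ?_
  set t := |M| / (Q ψ₀ - u) + 1
  have ht : 0 ≤ t := by positivity
  refine lt_of_lt_of_le ?_ (le_iSup _ (t • ψ₀))
  have hsup : ⨆ i, (Δ i (t • ψ₀) : EReal) ≤ (t * u : ℝ) := iSup_le fun i => by
    rw [map_smul, smul_eq_mul, EReal.coe_le_coe_iff]
    exact mul_le_mul_of_nonneg_left (hΔψ₀ i) ht
  calc (M : EReal) < (t * Q ψ₀ - t * u : ℝ) := by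
        rw [EReal.coe_lt_coe_iff, ← mul_sub, add_mul, div_mul_cancel₀ _ hgap.ne', one_mul]
        linarith [le_abs_self M]
    _ ≤ (Q (t • ψ₀) : EReal) - ⨆ i, (Δ i (t • ψ₀) : EReal) := by
        rw [EReal.coe_sub, map_smul, smul_eq_mul]
        exact EReal.sub_le_sub le_rfl hsup

end WeakDual

namespace FTransform

variable {X : Type*} [TopologicalSpace X] {Y : Type*} [NormedAddCommGroup Y] [NormedSpace ℝ Y]
  (j : Y →ₗ[ℝ] (X →ᵇ ℝ))

theorem sub_apply (f : X → EReal) (φ : Y) (Q : WeakDual ℝ Y) :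
    FTransform j (fun x => f x - (j φ x : EReal)) Q = FTransform j f Q - (Q φ : EReal) := by
  have hconj (ψ : Y) : ⨆ x, ((j ψ x : EReal) - (f x - (j φ x : EReal))) =
      ⨆ x, ((j (ψ + φ) x : EReal) - f x) := by
    simp only [EReal.coe_sub_sub_coe_eq_add_sub, map_add, BoundedContinuousFunction.add_apply]
  calc FTransform j (fun x => f x - (j φ x : EReal)) Q
      = ⨆ ψ, ((Q (ψ + φ - φ) : EReal) - ⨆ x, ((j (ψ + φ) x : EReal) - f x)) := by
        simp only [FTransform, hconj, add_sub_cancel_right]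
    _ = ⨆ χ, ((Q (χ - φ) : EReal) - ⨆ x, ((j χ x : EReal) - f x)) :=
        (Equiv.addRight φ).iSup_comp
          (g := fun χ => (Q (χ - φ) : EReal) - ⨆ x, ((j χ x : EReal) - f x))
    _ = FTransform j f Q - (Q φ : EReal) := by
        simp only [FTransform, map_sub, EReal.coe_sub_sub_right_comm, EReal.iSup_sub_coe]

theorem coe_apply (φ : Y) (Q : WeakDual ℝ Y) :
    FTransform j (fun x => (j φ x : EReal)) Q = FTransform j 0 Q + (Q φ : EReal) := by
  simpa [sub_eq_add_neg] using sub_apply j 0 (-φ) Q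

theorem zero_apply {Δ : X → WeakDual ℝ Y} (hΔ : ∀ x ψ, Δ x ψ = j ψ x)
    (Q : WeakDual ℝ Y) :
    FTransform j 0 Q = ⨆ ψ : Y, ((Q ψ : EReal) - ⨆ x, (Δ x ψ : EReal)) := by
  simp only [FTransform, hΔ, Pi.zero_apply, sub_zero]

end FTransform

theorem FTransform_sub_continuous_general
    {X : Type*} [TopologicalSpace X]
    (Y : Type*) [NormedAddCommGroup Y] [NormedSpace ℝ Y]
    (j : Y →ₗ[ℝ] (X →ᵇ ℝ))
    (hnorm : ∀ ψ : Y, ‖j ψ‖ ≤ ‖ψ‖)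
    (f : X → EReal)
    (φ : Y) :
    (∀ Q : WeakDual ℝ Y,
      FTransform j (fun x => f x - (j φ x : EReal)) Q = FTransform j f Q - (Q φ : EReal)) ∧
    ∃ Δ : X → WeakDual ℝ Y, (∀ (x : X) (ψ : Y), Δ x ψ = j ψ x) ∧
      (∀ Q ∈ closure (convexHull ℝ (Set.range Δ)),
        FTransform j (fun x => ((j φ x : ℝ) : EReal)) Q = (Q φ : EReal)) ∧
      (∀ Q : WeakDual ℝ Y, Q ∉ closure (convexHull ℝ (Set.range Δ)) →
        FTransform j (fun x => ((j φ x : ℝ) : EReal)) Q = ⊤) := by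
  refine ⟨FTransform.sub_apply j f φ, ?_⟩
  let Δ (x : X) : WeakDual ℝ Y :=
    (evalCLM ℝ x).comp (j.mkContinuous 1 fun ψ => by simpa using hnorm ψ)
  have hΔ (x : X) (ψ : Y) : Δ x ψ = j ψ x := rfl
  refine ⟨Δ, hΔ, fun Q hQ => ?_, fun Q hQ => ?_⟩ <;>
    rw [FTransform.coe_apply, FTransform.zero_apply j hΔ]
  · rw [WeakDual.iSup_sub_iSup_eq_zero_of_mem_closure_convexHull hQ, zero_add]
  · rw [WeakDual.iSup_sub_iSup_eq_top_of_notMem_closure_convexHull hQ, EReal.top_add_coe]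

theorem FTransform_sub_continuous
    {X : Type*} [TopologicalSpace X] [T2Space X] [NormalSpace X]
    (Y : Type*) [NormedAddCommGroup Y] [NormedSpace ℝ Y] [CompleteSpace Y]
    (j : Y →ₗ[ℝ] (X →ᵇ ℝ)) (hj : Function.Injective j)
    (hnorm : ∀ ψ : Y, ‖j ψ‖ ≤ ‖ψ‖)
    (hH : ∀ x : X, ∀ U : Set X, IsOpen U → x ∈ U →
      ∃ σ : Y, (∀ y, j σ y ∈ Set.Icc (0 : ℝ) 1) ∧ j σ x = 1 ∧ ∀ y ∉ U, j σ y = 0)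
    (f : X → EReal) (hf : LowerSemicontinuous f)
    (hbdd : ∃ m : ℝ, ∀ x, (m : EReal) ≤ f x) (hdom : ∃ x, f x ≠ ⊤)
    (φ : Y) :
    (∀ Q : WeakDual ℝ Y,
      FTransform j (fun x => f x - (j φ x : EReal)) Q = FTransform j f Q - (Q φ : EReal)) ∧
    ∃ Δ : X → WeakDual ℝ Y, (∀ (x : X) (ψ : Y), Δ x ψ = j ψ x) ∧
      (∀ Q ∈ closure (convexHull ℝ (Set.range Δ)),
        FTransform j (fun x => ((j φ x : ℝ) : EReal)) Q = (Q φ : EReal)) ∧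
      (∀ Q : WeakDual ℝ Y, Q ∉ closure (convexHull ℝ (Set.range Δ)) →
        FTransform j (fun x => ((j φ x : ℝ) : EReal)) Q = ⊤) :=
  FTransform_sub_continuous_general Y j hnorm f φ
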